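/- arXiv:2210.14640 — 3 statements merged into one kernel-verified Lean document; each statement's English description precedes it below -/
import Mathlib

section
/- Let f : Δⁿ → R be an affine (linear) function on the probability simplex Δⁿ whose values lie in the interval [Vmin, Vmax]. Then f is Lipschitz continuous with respect to the 1-norm with Lipschitz constant (Vmax − Vmin)/2, i.e., for all σ, σ' ∈ Δⁿ, |f(σ) − f(σ')| ≤ ((Vmax − Vmin)/2)·‖σ − σ'‖₁. -/
/-- An affine function on the probability simplex with values in `[Vmin, Vmax]`
is `(Vmax - Vmin)/2`-Lipschitz w.r.t. the 1-norm. -/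
theorem affine_on_simplex_lipschitz (n : ℕ) (c : Fin n → ℝ) (Vmin Vmax : ℝ)
    (hbdd : ∀ σ : Fin n → ℝ, (∀ i, 0 ≤ σ i) → ∑ i, σ i = 1 →
      Vmin ≤ ∑ i, c i * σ i ∧ ∑ i, c i * σ i ≤ Vmax) :
    ∀ σ σ' : Fin n → ℝ,
      (∀ i, 0 ≤ σ i) → ∑ i, σ i = 1 →
      (∀ i, 0 ≤ σ' i) → ∑ i, σ' i = 1 →
      |(∑ i, c i * σ i) - ∑ i, c i * σ' i| ≤
        (Vmax - Vmin) / 2 * ∑ i, |σ i - σ' i| := by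
  intro σ σ' hσ hσs hσ' hσ's
  set m : ℝ := (Vmin + Vmax) / 2 with hm
  have hc : ∀ i, |c i - m| ≤ (Vmax - Vmin) / 2 := by
    intro i
    have h := hbdd (Pi.single i 1)
      (by intro j; by_cases h : j = i <;> simp [Pi.single_apply, h])
      (by simp [Finset.sum_pi_single'])
    have hs : ∑ j, c j * (Pi.single i 1 : Fin n → ℝ) j = c i := by
      simp [Pi.single_apply, Finset.sum_ite_eq']
    rw [hs] at h
    rw [abs_le]
    constructor <;> [skip; skip] <;> simp only [hm] <;> linarith [h.1, h.2]
  have key : (∑ i, c i * σ i) - ∑ i, c i * σ' i = ∑ i, (c i - m) * (σ i - σ' i) := by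
    have h0 : ∑ i, (c i - m) * (σ i - σ' i)
        = (∑ i, c i * σ i) - (∑ i, c i * σ' i) - m * ((∑ i, σ i) - ∑ i, σ' i) := by
      simp only [sub_mul, mul_sub, Finset.sum_sub_distrib, Finset.mul_sum]
      ring
    rw [h0, hσs, hσ's]
    ring
  rw [key]
  calc |∑ i, (c i - m) * (σ i - σ' i)| ≤ ∑ i, |(c i - m) * (σ i - σ' i)| :=
        Finset.abs_sum_le_sum_abs _ _
    _ = ∑ i, |c i - m| * |σ i - σ' i| := by simp [abs_mul]
    _ ≤ ∑ i, (Vmax - Vmin) / 2 * |σ i - σ' i| :=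
        Finset.sum_le_sum (fun i _ =>
          mul_le_mul_of_nonneg_right (hc i) (abs_nonneg _))
    _ = (Vmax - Vmin) / 2 * ∑ i, |σ i - σ' i| := by rw [Finset.mul_sum]
end

section
/- Let γ ∈ (0,1), ε > 0, λ∞ > 0, W > ε, and suppose 0 < ρ < ((1−γ)/(2λ∞))·ε so that both ε − 2ρλ∞/(1−γ) > 0 and W − 2ρλ∞/(1−γ) > 0. Define thr(τ) = γ^(−τ)ε − 2ρλ∞(γ^(−τ)−1)/(1−γ). Then for any natural number τ, thr(τ) < W implies τ < log_γ( (ε − 2ρλ∞/(1−γ)) / (W − 2ρλ∞/(1−γ)) ). In particular, the set of τ with thr(τ) < W is bounded. -/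
/-- Bound on the length of HSVI trajectories in the discounted infinite-horizon
case: if `thr τ < W` then `τ < log_γ((ε − 2ρλ∞/(1−γ))/(W − 2ρλ∞/(1−γ)))`. -/
theorem trajectory_length_bound (γ ε lam W ρ : ℝ)
    (hγ0 : 0 < γ) (hγ1 : γ < 1) (hε : 0 < ε) (hlam : 0 < lam)
    (hW : ε < W) (hρ0 : 0 < ρ) (hρ : ρ < (1 - γ) / (2 * lam) * ε)
    (hεpos : 0 < ε - 2 * ρ * lam / (1 - γ))
    (hWpos : 0 < W - 2 * ρ * lam / (1 - γ)) :
    ∀ τ : ℕ,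
      γ ^ (-(τ : ℤ)) * ε - 2 * ρ * lam * (γ ^ (-(τ : ℤ)) - 1) / (1 - γ) < W →
      (τ : ℝ) <
        Real.logb γ ((ε - 2 * ρ * lam / (1 - γ)) / (W - 2 * ρ * lam / (1 - γ))) := by
  intro τ h
  have h1γ : (0:ℝ) < 1 - γ := by linarith
  have hp : (0:ℝ) < γ ^ τ := pow_pos hγ0 τ
  have hz : γ ^ (-(τ:ℤ)) = (γ ^ τ)⁻¹ := by rw [zpow_neg, zpow_natCast]
  rw [hz] at h
  set c := 2 * ρ * lam / (1 - γ) with hc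
  have heq : 2 * ρ * lam * ((γ ^ τ)⁻¹ - 1) / (1 - γ) = (γ ^ τ)⁻¹ * c - c := by
    rw [hc]; field_simp
  have hms : (γ ^ τ)⁻¹ * (ε - c) = (γ ^ τ)⁻¹ * ε - (γ ^ τ)⁻¹ * c := mul_sub _ _ _
  have h3 : (γ ^ τ)⁻¹ * (ε - c) < W - c := by linarith
  have h5 : ε - c < γ ^ τ * (W - c) := by
    have h6 := mul_lt_mul_of_pos_left h3 hp
    rwa [← mul_assoc, mul_inv_cancel₀ hp.ne', one_mul] at h6
  have h4 : (ε - c) / (W - c) < γ ^ τ := (div_lt_iff₀ hWpos).mpr h5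
  have hdivpos : 0 < (ε - c) / (W - c) := div_pos hεpos hWpos
  have := Real.logb_lt_logb_of_base_lt_one hγ0 hγ1 hdivpos h4
  rwa [Real.logb_pow, Real.logb_self_eq_one_iff.mpr ⟨hγ0.ne', hγ1.ne, by linarith⟩,
    mul_one] at this
end

section
/- Let b₀ be a probability distribution over a finite state set S, and let a Markov process with finite state, action, and observation sets evolve under the joint kernel P(s', z¹, z² | s, a¹, a²). For behavioral strategy profiles, define the occupancy state σ_τ(θ¹, θ²) = Pr(joint action-observation history (θ¹, θ²) at time τ | strategies). Then σ_{τ+1}, viewed as a function of (σ_τ, β¹_τ, β²_τ), satisfies σ_{τ+1}((θ¹,a¹,z¹),(θ²,a²,z²)) = β¹_τ(a¹|θ¹)·β²_τ(a²|θ²)·σ_τ(θ¹,θ²)·Σ_{s,s'} P(s',z¹,z²|s,a¹,a²)·b(s|θ¹,θ²), where b(s|θ¹,θ²) is the belief obtained by HMM filtering from b₀ along (θ¹,θ²); in particular σ_{τ+1} depends on the past strategies only through σ_τ. -/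
/-- Markov/sufficiency property of occupancy states: the next occupancy state is
determined by the current occupancy state and the current decision rules, via
`σ_{τ+1}((θ¹,a¹,z¹),(θ²,a²,z²)) =
  β¹(a¹|θ¹) β²(a²|θ²) σ_τ(θ¹,θ²) Σ_{s,s'} P(s',z¹,z²|s,a¹,a²) b(s|θ¹,θ²)`. -/
theorem occupancy_state_markov
    (S A1 A2 Z1 Z2 : Type) [Fintype S] [Fintype A1] [Fintype A2] [Fintype Z1] [Fintype Z2]
    (b0 : S → ℝ) (hb00 : ∀ s, 0 ≤ b0 s) (hb01 : ∑ s, b0 s = 1)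
    (P : S → A1 → A2 → S → Z1 → Z2 → ℝ)
    (hP0 : ∀ s a1 a2 s' z1 z2, 0 ≤ P s a1 a2 s' z1 z2)
    (hP1 : ∀ s a1 a2, ∑ s', ∑ z1, ∑ z2, P s a1 a2 s' z1 z2 = 1)
    (β1 : (τ : ℕ) → (Fin τ → A1 × Z1) → A1 → ℝ)
    (β2 : (τ : ℕ) → (Fin τ → A2 × Z2) → A2 → ℝ)
    (hβ10 : ∀ τ θ a, 0 ≤ β1 τ θ a) (hβ11 : ∀ τ θ, ∑ a, β1 τ θ a = 1)
    (hβ20 : ∀ τ θ a, 0 ≤ β2 τ θ a) (hβ21 : ∀ τ θ, ∑ a, β2 τ θ a = 1)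
    -- full occupancy (joint probability of state and joint history), by filtering
    (o : (τ : ℕ) → S → (Fin τ → A1 × Z1) → (Fin τ → A2 × Z2) → ℝ)
    (ho0 : ∀ s θ1 θ2, o 0 s θ1 θ2 = b0 s)
    (hoS : ∀ (τ : ℕ) (s' : S) (θ1 : Fin τ → A1 × Z1) (θ2 : Fin τ → A2 × Z2)
        (a1 : A1) (z1 : Z1) (a2 : A2) (z2 : Z2),
      o (τ + 1) s' (Fin.snoc θ1 (a1, z1)) (Fin.snoc θ2 (a2, z2)) =
        ∑ s, o τ s θ1 θ2 * β1 τ θ1 a1 * β2 τ θ2 a2 * P s a1 a2 s' z1 z2)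
    -- occupancy state: marginal of o over states
    (σ : (τ : ℕ) → (Fin τ → A1 × Z1) → (Fin τ → A2 × Z2) → ℝ)
    (hσ : ∀ τ θ1 θ2, σ τ θ1 θ2 = ∑ s, o τ s θ1 θ2)
    (b : (τ : ℕ) → S → (Fin τ → A1 × Z1) → (Fin τ → A2 × Z2) → ℝ)
    (hb : ∀ τ s θ1 θ2, σ τ θ1 θ2 ≠ 0 →
      b τ s θ1 θ2 = o τ s θ1 θ2 / σ τ θ1 θ2)
    (τ : ℕ) (θ1 : Fin τ → A1 × Z1) (θ2 : Fin τ → A2 × Z2)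
    (a1 : A1) (z1 : Z1) (a2 : A2) (z2 : Z2)
    (hpos : σ τ θ1 θ2 ≠ 0) :
    σ (τ + 1) (Fin.snoc θ1 (a1, z1)) (Fin.snoc θ2 (a2, z2)) =
      β1 τ θ1 a1 * β2 τ θ2 a2 * σ τ θ1 θ2 *
        ∑ s, ∑ s', P s a1 a2 s' z1 z2 * b τ s θ1 θ2 := by
  rw [hσ]
  simp only [hoS, hb _ _ _ _ hpos]
  rw [Finset.sum_comm, Finset.mul_sum]
  refine Finset.sum_congr rfl fun s _ => ?_
  rw [Finset.mul_sum]
  refine Finset.sum_congr rfl fun s' _ => ?_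
  field_simp
end
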